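/- Let U_∞(U₀) := -U_c · W_p(-(U₀/U_c) e^{-U₀/U_c}) with U_c > 0 fixed (the I₀ = 0, V₀ → 0 limit of the final-size relation). Then: U_∞(U₀) → 0 as U₀ → 0⁺ and as U₀ → ∞; U_∞(U₀) → U_c as U₀ → U_c; U_∞ is strictly increasing on (0, U_c); and U_∞ is strictly decreasing on (U_c, ∞). -/

import Mathlib

/-!
`W` inverts `t ↦ t e^t` on `[-1, 0]`, so it is strictly increasing on `[-1/e, 0]`, and continuous
there because it maps that interval monotonically onto the interval `[-1, 0]`. For
`U₀ ∈ [0, U_c]` the argument `-(U₀/U_c) e^{-U₀/U_c}` is `t e^t` with `t ∈ [-1, 0]`, so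
`U_∞(U₀) = U₀`. Past `U_c` the argument climbs back towards `0`, because `t e^t` decreases on
`(-∞, -1]`; hence `U_∞` decreases, and tends to `-U_c W(0) = 0` by continuity of `W` at `0`.
-/

open Filter Topology Set Real

theorem StrictMonoOn.continuousOn_of_image_Icc {α β : Type*}
    [LinearOrder α] [TopologicalSpace α] [OrderTopology α]
    [LinearOrder β] [TopologicalSpace β] [OrderTopology β] [DenselyOrdered β]
    {g : α → β} {a b : α} (hg : StrictMonoOn g (Icc a b))
    (himage : g '' Icc a b = Icc (g a) (g b)) : ContinuousOn g (Icc a b) := by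
  intro x hx
  have ha : a ∈ Icc a b := left_mem_Icc.2 (hx.1.trans hx.2)
  have hb : b ∈ Icc a b := right_mem_Icc.2 (hx.1.trans hx.2)
  rw [← Icc_union_Icc_eq_Icc hx.1 hx.2]
  refine ContinuousWithinAt.union ?_ ?_
  · rcases hx.1.eq_or_lt with rfl | hax
    · simp
    refine (hg.continuousWithinAt_left_of_image_mem_nhdsWithin
      (Icc_mem_nhdsLE_of_mem ⟨hax, hx.2⟩) ?_).mono Icc_subset_Iic_self
    rw [himage]
    exact Icc_mem_nhdsLE_of_mem ⟨hg ha hx hax, hg.monotoneOn hx hb hx.2⟩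
  · rcases hx.2.eq_or_lt with rfl | hxb
    · simp
    refine (hg.continuousWithinAt_right_of_image_mem_nhdsWithin
      (Icc_mem_nhdsGE_of_mem ⟨hx.1, hxb⟩) ?_).mono Icc_subset_Ici_self
    rw [himage]
    exact Icc_mem_nhdsGE_of_mem ⟨hg.monotoneOn ha hx hx.1, hg hx hb hxb⟩

namespace Real

theorem hasDerivAt_mul_exp (t : ℝ) :
    HasDerivAt (fun t => t * exp t) ((t + 1) * exp t) t :=
  ((hasDerivAt_id' t).mul (hasDerivAt_exp t)).congr_deriv (by ring)

theorem strictMonoOn_mul_exp : StrictMonoOn (fun t => t * exp t) (Ici (-1)) := by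
  refine strictMonoOn_of_deriv_pos (convex_Ici _) (by fun_prop) fun t ht => ?_
  rw [interior_Ici, mem_Ioi] at ht
  rw [(hasDerivAt_mul_exp t).deriv]
  exact mul_pos (by linarith) (exp_pos t)

theorem strictAntiOn_mul_exp : StrictAntiOn (fun t => t * exp t) (Iic (-1)) := by
  refine strictAntiOn_of_deriv_neg (convex_Iic _) (by fun_prop) fun t ht => ?_
  rw [interior_Iic, mem_Iio] at ht
  rw [(hasDerivAt_mul_exp t).deriv]
  exact mul_neg_of_neg_of_pos (by linarith) (exp_pos t)

theorem neg_exp_neg_one_le_mul_exp (t : ℝ) : -exp (-1) ≤ t * exp t := by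
  have h : -t * exp t ≤ exp (-t - 1) * exp t :=
    mul_le_mul_of_nonneg_right (by linarith [add_one_le_exp (-t - 1)]) (exp_pos t).le
  rw [← exp_add, show -t - 1 + t = -1 by ring] at h
  linarith

theorem mul_exp_mem_Icc {t : ℝ} (ht : t ≤ 0) : t * exp t ∈ Icc (-exp (-1)) 0 :=
  ⟨neg_exp_neg_one_le_mul_exp t, mul_nonpos_of_nonpos_of_nonneg ht (exp_pos t).le⟩

end Real

def IsLambertW0 (W : ℝ → ℝ) : Prop :=
  ∀ x : ℝ, -exp (-1) ≤ x → x ≤ 0 → W x * exp (W x) = x ∧ -1 ≤ W x ∧ W x ≤ 0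

namespace IsLambertW0

variable {W : ℝ → ℝ}

theorem mapsTo (hW : IsLambertW0 W) : MapsTo W (Icc (-exp (-1)) 0) (Icc (-1) 0) :=
  fun x hx => ⟨(hW x hx.1 hx.2).2.1, (hW x hx.1 hx.2).2.2⟩

theorem apply_mul_exp (hW : IsLambertW0 W) {t : ℝ} (ht : t ∈ Icc (-1) 0) :
    W (t * exp t) = t := by
  have hx := mul_exp_mem_Icc ht.2
  exact strictMonoOn_mul_exp.injOn (Icc_subset_Ici_self (hW.mapsTo hx)) (Icc_subset_Ici_self ht)
    (hW _ hx.1 hx.2).1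

theorem apply_neg_exp_neg_one (hW : IsLambertW0 W) : W (-exp (-1)) = -1 := by
  simpa using hW.apply_mul_exp (t := -1) ⟨le_rfl, by norm_num⟩

theorem apply_zero (hW : IsLambertW0 W) : W 0 = 0 := by
  simpa using hW.apply_mul_exp (t := 0) ⟨by norm_num, le_rfl⟩

theorem strictMonoOn (hW : IsLambertW0 W) : StrictMonoOn W (Icc (-exp (-1)) 0) := by
  intro x hx y hy hxy
  by_contra! hle
  have hyx := strictMonoOn_mul_exp.monotoneOn (Icc_subset_Ici_self (hW.mapsTo hy))
    (Icc_subset_Ici_self (hW.mapsTo hx)) hle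
  simp only [(hW x hx.1 hx.2).1, (hW y hy.1 hy.2).1] at hyx
  exact hxy.not_ge hyx

theorem image_Icc (hW : IsLambertW0 W) : W '' Icc (-exp (-1)) 0 = Icc (-1) 0 :=
  (hW.mapsTo.image_subset).antisymm fun t ht =>
    ⟨t * exp t, mul_exp_mem_Icc ht.2, hW.apply_mul_exp ht⟩

theorem continuousOn (hW : IsLambertW0 W) : ContinuousOn W (Icc (-exp (-1)) 0) :=
  hW.strictMonoOn.continuousOn_of_image_Icc <| by
    rw [hW.image_Icc, hW.apply_neg_exp_neg_one, hW.apply_zero]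

end IsLambertW0

noncomputable def finalSize (W : ℝ → ℝ) (Uc U₀ : ℝ) : ℝ :=
  -Uc * W (-(U₀ / Uc) * exp (-(U₀ / Uc)))

section finalSize

variable {W : ℝ → ℝ} {Uc : ℝ}

theorem finalSize_eq_self (hW : IsLambertW0 W) (hUc : 0 < Uc) {U₀ : ℝ}
    (hU₀ : U₀ ∈ Icc 0 Uc) : finalSize W Uc U₀ = U₀ := by
  have hu : U₀ / Uc ∈ Icc 0 1 := ⟨div_nonneg hU₀.1 hUc.le, (div_le_one hUc).2 hU₀.2⟩
  rw [finalSize, hW.apply_mul_exp ⟨neg_le_neg hu.2, neg_nonpos.2 hu.1⟩]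
  field_simp

theorem continuousOn_finalSize (hW : IsLambertW0 W) (hUc : 0 < Uc) :
    ContinuousOn (finalSize W Uc) (Ici 0) := by
  refine continuousOn_const.mul (hW.continuousOn.comp (by fun_prop) fun U₀ hU₀ => ?_)
  exact mul_exp_mem_Icc (neg_nonpos.2 (div_nonneg hU₀ hUc.le))

theorem tendsto_finalSize_atTop (hW : IsLambertW0 W) (hUc : 0 < Uc) :
    Tendsto (finalSize W Uc) atTop (𝓝 0) := by
  have harg : Tendsto (fun U₀ => -(U₀ / Uc) * exp (-(U₀ / Uc))) atTop
      (𝓝[Icc (-exp (-1)) 0] 0) := by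
    refine tendsto_nhdsWithin_iff.2 ⟨?_, ?_⟩
    · simpa using ((tendsto_pow_mul_exp_neg_atTop_nhds_zero 1).comp
        (tendsto_id.atTop_div_const hUc)).neg
    · filter_upwards [eventually_ge_atTop 0] with U₀ hU₀
      exact mul_exp_mem_Icc (neg_nonpos.2 (div_nonneg hU₀ hUc.le))
  have hW0 := (hW.continuousOn 0 ⟨neg_nonpos.2 (exp_pos _).le, le_rfl⟩).tendsto.comp harg
  have hlim := hW0.const_mul (-Uc)
  rw [hW.apply_zero, mul_zero] at hlim
  exact hlim

theorem strictAntiOn_finalSize (hW : IsLambertW0 W) (hUc : 0 < Uc) :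
    StrictAntiOn (finalSize W Uc) (Ioi Uc) := by
  have hneg : StrictAntiOn (fun U₀ : ℝ => -(U₀ / Uc)) (Ioi Uc) :=
    fun a _ b _ hab => neg_lt_neg (div_lt_div_of_pos_right hab hUc)
  have hmaps : MapsTo (fun U₀ : ℝ => -(U₀ / Uc)) (Ioi Uc) (Iic (-1)) :=
    fun U₀ hU₀ => neg_le_neg ((one_lt_div hUc).2 hU₀).le
  have hW_arg := hW.strictMonoOn.comp (strictAntiOn_mul_exp.comp hneg hmaps)
    fun U₀ hU₀ => mul_exp_mem_Icc ((hmaps hU₀).trans (by norm_num))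
  exact fun a ha b hb hab => mul_lt_mul_of_neg_left (hW_arg ha hb hab) (neg_neg_of_pos hUc)

end finalSize

/-- Properties of `U_∞(U₀) = -U_c · W_p(-(U₀/U_c) e^{-U₀/U_c})`, where `W_p` is the
principal branch of the Lambert W function (characterized on `[-1/e, 0]` by
`W e^W = x` and `-1 ≤ W ≤ 0`): `U_∞ → 0` as `U₀ → 0⁺` and as `U₀ → ∞`,
`U_∞ → U_c` as `U₀ → U_c`, `U_∞` is strictly increasing on `(0, U_c)` and strictly
decreasing on `(U_c, ∞)`. -/
theorem Uinf_properties
    (Uc : ℝ) (hUc : 0 < Uc)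
    (W : ℝ → ℝ)
    (hW : ∀ x : ℝ, -Real.exp (-1) ≤ x → x ≤ 0 →
      W x * Real.exp (W x) = x ∧ -1 ≤ W x ∧ W x ≤ 0)
    (Uinf : ℝ → ℝ)
    (hUinf : ∀ U₀ : ℝ, Uinf U₀ = -Uc * W (-(U₀ / Uc) * Real.exp (-(U₀ / Uc)))) :
    Tendsto Uinf (nhdsWithin 0 (Set.Ioi 0)) (nhds 0) ∧
    Tendsto Uinf atTop (nhds 0) ∧
    Tendsto Uinf (nhds Uc) (nhds Uc) ∧
    StrictMonoOn Uinf (Set.Ioo 0 Uc) ∧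
    StrictAntiOn Uinf (Set.Ioi Uc) := by
  obtain rfl : Uinf = finalSize W Uc := funext hUinf
  have hcont := continuousOn_finalSize hW hUc
  have h0 : finalSize W Uc 0 = 0 := finalSize_eq_self hW hUc ⟨le_rfl, hUc.le⟩
  have hc : finalSize W Uc Uc = Uc := finalSize_eq_self hW hUc ⟨hUc.le, le_rfl⟩
  refine ⟨?_, tendsto_finalSize_atTop hW hUc, ?_, ?_, strictAntiOn_finalSize hW hUc⟩
  · simpa [h0] using ((hcont 0 self_mem_Ici).mono Ioi_subset_Ici_self).tendsto
  · simpa [hc] using (hcont.continuousAt (Ici_mem_nhds hUc)).tendsto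
  · exact strictMonoOn_id.congr fun U₀ hU₀ =>
      (finalSize_eq_self hW hUc (Ioo_subset_Icc_self hU₀)).symm
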